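/- Let r ≥ 2 and m ≥ 1 be integers. A vector x ∈ F_2^{Z_{r+1}^m} belongs to the code C defined by the parity-check matrix H if and only if for every i ∈ {1,…,m} and every α ∈ Z_{r+1}^m, ∑_{λ=0}^{r} x_{α[i:=λ]} = 0 over F_2, where α[i:=λ] denotes α with its i-th entry replaced by λ. In other words, C equals the direct product of m copies of the [r+1,r] single-parity-check code: the code of all m-dimensional arrays over F_2 whose sum along every axis-parallel line is zero. -/

import Mathlib

/-- `Z_r^m ⊆ Z_{r+1}^m`: the tuples all of whose entries are `< r`;
`Lset r m α` is the set `L(α) = {μ ∈ Z_r^m : μ_j = α_j for all j ∈ T(α)}`,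
where `T(α) = {j : α_j ≤ r-1}`. -/
def Lset (r m : ℕ) (α : Fin m → Fin (r + 1)) : Finset (Fin m → Fin (r + 1)) :=
  Finset.univ.filter fun μ =>
    (∀ j, (μ j : ℕ) < r) ∧ ∀ j, (α j : ℕ) < r → μ j = α j

/-- The binary code `C` with parity-check matrix `H`: all vectors
`x ∈ F_2^{Z_{r+1}^m}` with `x_α = ∑_{β ∈ L(α)} x_β` for every
`α ∈ Z_{r+1}^m \ Z_r^m`. -/
def codeC (r m : ℕ) : Set ((Fin m → Fin (r + 1)) → ZMod 2) :=
  {x | ∀ α : Fin m → Fin (r + 1), ¬(∀ j, (α j : ℕ) < r) →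
    x α = ∑ β ∈ Lset r m α, x β}

/-!
Write `x̂ = lsetSum r m x`, i.e. `x̂ α = ∑_{β ∈ L(α)} x β`, so that `C` is the set of fixed
points of `x ↦ x̂`. For `λ < r`, the sets `L(α[i:=λ])` are the fibres of `μ ↦ μ i` on
`L(α[i:=r])`, so every line sum of `x̂` equals `2 ∑_{β ∈ L(α[i:=r])} x β = 0`. Conversely, an
array with vanishing line sums is determined by its values on `Z_r^m`: its value at a point
with `α i = r` is minus the sum of its values at the other points of the `i`-line, which have
one entry `r` fewer. Since `x` and `x̂` agree on `Z_r^m`, an `x` with vanishing line sums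
equals `x̂`.
-/

open Finset Function

theorem eq_of_sum_update_eq_zero {ι M : Type*} [Fintype ι] [DecidableEq ι] [AddCommGroup M] {n : ℕ}
    {y z : (ι → Fin (n + 1)) → M}
    (hy : ∀ i α, ∑ l, y (update α i l) = 0) (hz : ∀ i α, ∑ l, z (update α i l) = 0)
    (hyz : ∀ α, (∀ j, α j ≠ Fin.last n) → y α = z α) : y = z := by
  suffices h : ∀ s : Finset ι, ∀ α, (∀ j ∉ s, α j ≠ Fin.last n) → y α = z α from
    funext fun α => h univ α (by simp)
  intro s
  induction s using Finset.induction_on with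
  | empty => simpa using hyz
  | insert i s _ ih =>
    intro α hα
    by_cases hαi : α i = Fin.last n
    · have hlast : ∀ w : (ι → Fin (n + 1)) → M, ∑ l, w (update α i l) = 0 →
          w α = -∑ l : Fin n, w (update α i l.castSucc) := by
        intro w hw
        have hα' : update α i (Fin.last n) = α := by rw [← hαi, update_eq_self]
        rw [Fin.sum_univ_castSucc, hα'] at hw
        exact eq_neg_of_add_eq_zero_right hw
      have hline (l : Fin n) : y (update α i l.castSucc) = z (update α i l.castSucc) := by
        refine ih _ fun j hj => ?_
        by_cases hji : j = i
        · simp [hji, Fin.castSucc_ne_last]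
        · simpa [update_of_ne hji] using hα j (by simp [hji, hj])
      rw [hlast y (hy i α), hlast z (hz i α), sum_congr rfl fun l _ => hline l]
    · refine ih α fun j hj => ?_
      by_cases hji : j = i
      · exact hji ▸ hαi
      · exact hα j (by simp [hji, hj])

section Lset

variable {r m : ℕ}

@[simp]
lemma mem_Lset {α μ : Fin m → Fin (r + 1)} :
    μ ∈ Lset r m α ↔ (∀ j, (μ j : ℕ) < r) ∧ ∀ j, (α j : ℕ) < r → μ j = α j := by
  simp [Lset]

lemma Lset_eq_singleton {α : Fin m → Fin (r + 1)} (h : ∀ j, (α j : ℕ) < r) :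
    Lset r m α = {α} := by
  ext μ
  simp only [mem_Lset, mem_singleton]
  constructor
  · rintro ⟨-, hμ⟩
    exact funext fun j => hμ j (h j)
  · rintro rfl
    exact ⟨h, fun _ _ => rfl⟩

lemma Lset_update_castSucc (α : Fin m → Fin (r + 1)) (i : Fin m) (l : Fin r) :
    Lset r m (update α i l.castSucc) =
      {μ ∈ Lset r m (update α i (Fin.last r)) | μ i = l.castSucc} := by
  ext μ
  simp only [mem_filter, mem_Lset]
  constructor
  · rintro ⟨hμ, hfix⟩
    refine ⟨⟨hμ, fun j hj => ?_⟩, by simpa using hfix i (by simp)⟩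
    have hji : j ≠ i := by rintro rfl; simp at hj
    simpa [update_of_ne hji] using hfix j (by simpa [update_of_ne hji] using hj)
  · rintro ⟨⟨hμ, hfix⟩, hμi⟩
    refine ⟨hμ, fun j hj => ?_⟩
    by_cases hji : j = i
    · simpa [hji] using hμi
    · simpa [update_of_ne hji] using hfix j (by simpa [update_of_ne hji] using hj)

lemma sum_sum_Lset_update_castSucc {M : Type*} [AddCommMonoid M]
    (x : (Fin m → Fin (r + 1)) → M) (α : Fin m → Fin (r + 1)) (i : Fin m) :
    ∑ l : Fin r, ∑ μ ∈ Lset r m (update α i l.castSucc), x μ =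
      ∑ μ ∈ Lset r m (update α i (Fin.last r)), x μ := by
  have hlast : {μ ∈ Lset r m (update α i (Fin.last r)) | μ i = Fin.last r} = ∅ :=
    filter_eq_empty_iff.mpr fun μ hμ hμi => by
      simpa [hμi] using (mem_Lset.mp hμ).1 i
  simp_rw [Lset_update_castSucc]
  rw [← sum_fiberwise _ (fun μ => μ i) x, Fin.sum_univ_castSucc, hlast, sum_empty, add_zero]

end Lset

def lsetSum {M : Type*} [AddCommMonoid M] (r m : ℕ) (x : (Fin m → Fin (r + 1)) → M)
    (α : Fin m → Fin (r + 1)) : M :=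
  ∑ β ∈ Lset r m α, x β

section lsetSum

variable {r m : ℕ}

lemma lsetSum_of_forall_lt {M : Type*} [AddCommMonoid M] (x : (Fin m → Fin (r + 1)) → M)
    {α : Fin m → Fin (r + 1)} (h : ∀ j, (α j : ℕ) < r) : lsetSum r m x α = x α := by
  rw [lsetSum, Lset_eq_singleton h, sum_singleton]

lemma sum_lsetSum_update {R : Type*} [Ring R] [CharP R 2] (x : (Fin m → Fin (r + 1)) → R)
    (i : Fin m) (α : Fin m → Fin (r + 1)) :
    ∑ l, lsetSum r m x (update α i l) = 0 := by
  rw [Fin.sum_univ_castSucc]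
  simp only [lsetSum]
  rw [sum_sum_Lset_update_castSucc]
  exact CharTwo.add_self_eq_zero _

lemma mem_codeC_iff_lsetSum_eq (x : (Fin m → Fin (r + 1)) → ZMod 2) :
    x ∈ codeC r m ↔ lsetSum r m x = x := by
  refine ⟨fun hx => funext fun α => ?_, fun hx α _ => (congrFun hx α).symm⟩
  by_cases h : ∀ j, (α j : ℕ) < r
  · exact lsetSum_of_forall_lt x h
  · exact (hx α h).symm

end lsetSum

theorem mem_codeC_iff_line_sums_zero_general (r m : ℕ)
    (x : (Fin m → Fin (r + 1)) → ZMod 2) :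
    x ∈ codeC r m ↔
      ∀ (i : Fin m) (α : Fin m → Fin (r + 1)),
        ∑ l : Fin (r + 1), x (Function.update α i l) = 0 := by
  rw [mem_codeC_iff_lsetSum_eq]
  refine ⟨fun hx => hx ▸ sum_lsetSum_update x, fun hx => ?_⟩
  refine eq_of_sum_update_eq_zero (sum_lsetSum_update x) hx fun α hα => ?_
  exact lsetSum_of_forall_lt x fun j => Fin.val_lt_last (hα j)

/-- `C` is exactly the direct product of `m` copies of the `[r+1, r]`
single-parity-check code: `x ∈ C` iff the sum of `x` along every axis-parallel
line is zero. -/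
theorem mem_codeC_iff_line_sums_zero (r m : ℕ) (hr : 2 ≤ r) (hm : 1 ≤ m)
    (x : (Fin m → Fin (r + 1)) → ZMod 2) :
    x ∈ codeC r m ↔
      ∀ (i : Fin m) (α : Fin m → Fin (r + 1)),
        ∑ l : Fin (r + 1), x (Function.update α i l) = 0 :=
  mem_codeC_iff_line_sums_zero_general r m x
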